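/- arXiv:1308.3999 — 3 statements merged into one kernel-verified Lean document; each statement's English description precedes it below -/
import Mathlib

section
/- There is no polynomial p(x) ∈ ℝ[x] and injective function f : ℕ → ℕ such that hom(K₁, Q_k) = p(f(k)) for all k and simultaneously some polynomial q with hom(K₂, Q_k) = q(f(k)) for all k. More precisely: there do not exist polynomials p, q and a function f : ℕ → ℕ with p(f(k)) = 2^k and q(f(k)) = k·2^k for all k ∈ ℕ. -/
open Filter Polynomial Topology

/-- A crude polynomial growth bound: `|p(x)| ≤ C (x+1)^n` for `x ≥ 0`. -/
lemma poly_growth_bound (p : Polynomial ℝ) :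
    ∃ C : ℝ, 0 < C ∧ ∀ x : ℝ, 0 ≤ x →
      |p.eval x| ≤ C * (x + 1) ^ p.natDegree := by
  refine ⟨(∑ i ∈ Finset.range (p.natDegree + 1), |p.coeff i|) + 1, by positivity, ?_⟩
  intro x hx
  have hx1 : (1 : ℝ) ≤ x + 1 := by linarith
  calc |p.eval x| = |∑ i ∈ Finset.range (p.natDegree + 1), p.coeff i * x ^ i| := by
        rw [Polynomial.eval_eq_sum_range]
    _ ≤ ∑ i ∈ Finset.range (p.natDegree + 1), |p.coeff i * x ^ i| :=
        Finset.abs_sum_le_sum_abs _ _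
    _ ≤ ∑ i ∈ Finset.range (p.natDegree + 1), |p.coeff i| * (x + 1) ^ p.natDegree := by
        refine Finset.sum_le_sum fun i hi => ?_
        rw [abs_mul]
        refine mul_le_mul_of_nonneg_left ?_ (abs_nonneg _)
        rw [abs_pow, abs_of_nonneg hx]
        calc x ^ i ≤ (x + 1) ^ i := pow_le_pow_left₀ hx (by linarith) i
          _ ≤ (x + 1) ^ p.natDegree :=
            pow_le_pow_right₀ hx1 (Nat.lt_succ_iff.mp (Finset.mem_range.mp hi))
    _ = (∑ i ∈ Finset.range (p.natDegree + 1), |p.coeff i|) * (x + 1) ^ p.natDegree := by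
        rw [Finset.sum_mul]
    _ ≤ ((∑ i ∈ Finset.range (p.natDegree + 1), |p.coeff i|) + 1) * (x + 1) ^ p.natDegree := by
        have : (0:ℝ) ≤ (x + 1) ^ p.natDegree := by positivity
        nlinarith

/-- There are no real polynomials `p`, `q` and reindexing function `f : ℕ → ℕ` with
`p(f(k)) = 2^k` and `q(f(k)) = k·2^k` for all `k`; i.e. the sequence of hypercubes
(`hom(K₁,Q_k) = 2^k`, `hom(K₂,Q_k) = k·2^k`) is not polynomial in any single
reindexing parameter. -/
theorem hypercubes_not_polynomial_sequence :
    ¬ ∃ (p q : Polynomial ℝ) (f : ℕ → ℕ),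
        (∀ k : ℕ, p.eval ((f k : ℝ)) = 2 ^ k) ∧
        (∀ k : ℕ, q.eval ((f k : ℝ)) = (k : ℝ) * 2 ^ k) := by
  rintro ⟨p, q, f, hp, hq⟩
  have h2pos : ∀ k : ℕ, (0:ℝ) < 2 ^ k := fun k => by positivity
  have hpne : p ≠ 0 := by
    intro h
    have := hp 0
    simp [h] at this
  have hqne : q ≠ 0 := by
    intro h
    have := hq 1
    simp [h] at this
  -- f is injective, hence tends to infinity
  have hinj : Function.Injective f := by
    intro a b hab
    have h : (2:ℝ) ^ a = 2 ^ b := by rw [← hp a, ← hp b, hab]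
    have h' : (2:ℕ) ^ a = 2 ^ b := by exact_mod_cast h
    exact Nat.pow_right_injective (le_refl 2) h'
  have hftop : Tendsto f atTop atTop := hinj.nat_tendsto_atTop
  have hfr : Tendsto (fun k => (f k : ℝ)) atTop atTop :=
    tendsto_natCast_atTop_atTop.comp hftop
  -- growth bound on p
  obtain ⟨C, hC, hbound⟩ := poly_growth_bound p
  set n := p.natDegree with hn
  -- key contradiction: f cannot be bounded by a linear function of k
  have key : ∀ c : ℝ, 0 < c → (∀ᶠ k : ℕ in atTop, (f k : ℝ) ≤ (k : ℝ) / c) → False := by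
    intro c hc hev
    set M : ℝ := max (1 / c) 1 with hM
    have hM1 : (1:ℝ) ≤ M := le_max_right _ _
    have hMpos : (0:ℝ) < M := lt_of_lt_of_le one_pos hM1
    set D : ℝ := C * M ^ n with hD
    have hDpos : 0 < D := by positivity
    have hub : ∀ᶠ k : ℕ in atTop, (2:ℝ) ^ k ≤ D * ((k:ℝ) + 1) ^ n := by
      filter_upwards [hev] with k hk
      have h1 : (2:ℝ) ^ k ≤ C * ((f k : ℝ) + 1) ^ n := by
        have hb := hbound (f k) (Nat.cast_nonneg _)
        rwa [hp k, abs_of_pos (h2pos k)] at hb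
      have h2 : ((f k : ℝ) + 1) ≤ M * ((k:ℝ) + 1) := by
        have hk' : (k:ℝ) / c ≤ M * k := by
          have : (1/c) ≤ M := le_max_left _ _
          have hknn : (0:ℝ) ≤ (k:ℝ) := Nat.cast_nonneg _
          calc (k:ℝ) / c = (1/c) * k := by ring
            _ ≤ M * k := mul_le_mul_of_nonneg_right this hknn
        calc ((f k : ℝ) + 1) ≤ (k:ℝ)/c + 1 := by linarith
          _ ≤ M * k + M := by linarith
          _ = M * ((k:ℝ) + 1) := by ring
      have h3 : ((f k : ℝ) + 1) ^ n ≤ (M * ((k:ℝ) + 1)) ^ n := by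
        refine pow_le_pow_left₀ ?_ h2 n
        positivity
      calc (2:ℝ) ^ k ≤ C * ((f k : ℝ) + 1) ^ n := h1
        _ ≤ C * (M * ((k:ℝ) + 1)) ^ n := by
            exact mul_le_mul_of_nonneg_left h3 (le_of_lt hC)
        _ = D * ((k:ℝ) + 1) ^ n := by rw [mul_pow]; ring
    -- but (k+1)^n / 2^k → 0
    have hgeo : Tendsto (fun k : ℕ => ((k:ℝ) + 1) ^ n / 2 ^ k) atTop (𝓝 0) := by
      have h0 := tendsto_pow_const_div_const_pow_of_one_lt n (by norm_num : (1:ℝ) < 2)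
      have h1 := h0.comp (tendsto_add_atTop_nat 1)
      have h2 := h1.const_mul (2:ℝ)
      rw [mul_zero] at h2
      refine h2.congr fun k => ?_
      simp only [Function.comp]
      push_cast
      rw [pow_succ]
      field_simp
    have hlt : ∀ᶠ k : ℕ in atTop, ((k:ℝ) + 1) ^ n / 2 ^ k < 1 / D :=
      hgeo.eventually_lt_const (by positivity)
    obtain ⟨k, hk1, hk2⟩ := (hub.and hlt).exists
    have h4 : D * ((k:ℝ) + 1) ^ n < 2 ^ k := by
      rw [div_lt_div_iff₀ (h2pos k) hDpos] at hk2
      nlinarith [h2pos k, hDpos]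
    linarith
  -- main case analysis on degrees
  rcases le_or_gt q.degree p.degree with hle | hgt
  · -- q/p tends to a finite limit, but q(f k)/p(f k) = k → ∞
    have hlim : ∃ L : ℝ, Tendsto (fun x => eval x q / eval x p) atTop (𝓝 L) := by
      rcases lt_or_eq_of_le hle with h | h
      · exact ⟨0, Polynomial.div_tendsto_zero_of_degree_lt q p h⟩
      · exact ⟨_, Polynomial.div_tendsto_leadingCoeff_div_of_degree_eq q p h⟩
    obtain ⟨L, hL⟩ := hlim
    have hcomp : Tendsto (fun k : ℕ => eval ((f k : ℝ)) q / eval ((f k : ℝ)) p)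
        atTop (𝓝 L) := hL.comp hfr
    have heq : (fun k : ℕ => eval ((f k : ℝ)) q / eval ((f k : ℝ)) p) =
        fun k : ℕ => (k : ℝ) := by
      funext k
      rw [hq k, hp k, mul_div_assoc, div_self (h2pos k).ne', mul_one]
    rw [heq] at hcomp
    exact not_tendsto_nhds_of_tendsto_atTop tendsto_natCast_atTop_atTop L hcomp
  · -- deg p < deg q: compare q with r = X * p
    set r : Polynomial ℝ := Polynomial.X * p with hrdef
    have hrne : r ≠ 0 := mul_ne_zero Polynomial.X_ne_zero hpne
    have hrdeg : r.degree = p.degree + 1 := by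
      rw [hrdef, Polynomial.degree_mul, Polynomial.degree_X, add_comm]
    have hrle : r.degree ≤ q.degree := by
      rw [hrdeg, Polynomial.degree_eq_natDegree hpne, Polynomial.degree_eq_natDegree hqne]
      rw [Polynomial.degree_eq_natDegree hpne, Polynomial.degree_eq_natDegree hqne] at hgt
      exact_mod_cast Nat.succ_le_of_lt (by exact_mod_cast hgt)
    -- eventually, q(f k)/r(f k) = k / f k
    have hev1 : ∀ᶠ k : ℕ in atTop, 1 ≤ f k := hftop.eventually (eventually_ge_atTop 1)
    have heq2 : ∀ᶠ k : ℕ in atTop,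
        eval ((f k : ℝ)) q / eval ((f k : ℝ)) r = (k : ℝ) / (f k : ℝ) := by
      filter_upwards [hev1] with k hk
      have hfk : (0:ℝ) < (f k : ℝ) := by exact_mod_cast hk
      rw [hrdef]
      rw [Polynomial.eval_mul, Polynomial.eval_X, hq k, hp k]
      rw [mul_div_mul_right _ _ (h2pos k).ne']
    have hnneg : ∀ᶠ k : ℕ in atTop, (0:ℝ) ≤ (k : ℝ) / (f k : ℝ) := by
      filter_upwards with k
      positivity
    rcases lt_or_eq_of_le hrle with hlt | hEq
    · -- |q/r| → ∞, so k / f k → ∞, so eventually f k ≤ k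
      have habs := (Polynomial.abs_div_tendsto_atTop_of_degree_gt q r hlt hrne).comp hfr
      have habs' : Tendsto (fun k : ℕ => (k : ℝ) / (f k : ℝ)) atTop atTop := by
        refine habs.congr' ?_
        filter_upwards [heq2, hnneg] with k h1 h2
        simp only [Function.comp]
        rw [h1, abs_of_nonneg h2]
      refine key 1 one_pos ?_
      filter_upwards [habs'.eventually (eventually_ge_atTop 1), hev1] with k h1 h2
      have hfk : (0:ℝ) < (f k : ℝ) := by exact_mod_cast h2
      rw [le_div_iff₀ hfk, one_mul] at h1
      linarith
    · -- q/r → L ≠ 0, so k / f k → L with L > 0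
      have hL := (Polynomial.div_tendsto_leadingCoeff_div_of_degree_eq q r hEq.symm).comp hfr
      set L : ℝ := q.leadingCoeff / r.leadingCoeff with hLdef
      have hL' : Tendsto (fun k : ℕ => (k : ℝ) / (f k : ℝ)) atTop (𝓝 L) := by
        refine hL.congr' ?_
        filter_upwards [heq2] with k h1
        simpa [Function.comp] using h1
      have hLne : L ≠ 0 :=
        div_ne_zero (Polynomial.leadingCoeff_ne_zero.mpr hqne)
          (Polynomial.leadingCoeff_ne_zero.mpr hrne)
      have hLnn : (0:ℝ) ≤ L := ge_of_tendsto hL' hnneg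
      have hLpos : 0 < L := lt_of_le_of_ne hLnn (Ne.symm hLne)
      refine key (L / 2) (by linarith) ?_
      have hgtev : ∀ᶠ k : ℕ in atTop, L / 2 < (k : ℝ) / (f k : ℝ) :=
        hL'.eventually (eventually_gt_nhds (by linarith : L / 2 < L))
      filter_upwards [hgtev, hev1] with k h1 h2
      have hfk : (0:ℝ) < (f k : ℝ) := by exact_mod_cast h2
      rw [lt_div_iff₀ hfk] at h1
      rw [le_div_iff₀ (by linarith : (0:ℝ) < L / 2)]
      linarith
end

section
/- For weighted graphs, the homomorphism count into the looped complete graph with loop weight ℓ satisfies hom(G, K_k^ℓ) = Σ_{f : V(G) → [k]} ℓ^{#{uv ∈ E(G) : f(u) = f(v)}}, and this equals the Potts-model partition-function specialization k^{c(G)} (ℓ−1)^{r(G)} T(G; (ℓ−1+k)/(ℓ−1), ℓ) of the Tutte polynomial, where c(G) is the number of connected components, r(G) = |V(G)| − c(G) is the rank, and T is the Tutte polynomial (assuming ℓ ≠ 1). -/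
open scoped Classical

/-- The rank of an edge subset `A`: `|V| − c(V, A)`, where `c(V, A)` is the number of
connected components of the spanning subgraph with edge set `A`. -/
noncomputable def edgeRank (V : Type*) [Fintype V] (A : Finset (Sym2 V)) : ℕ :=
  Fintype.card V - Nat.card (SimpleGraph.fromEdgeSet (↑A : Set (Sym2 V))).ConnectedComponent

/-- The Tutte polynomial `T(G;x,y) = Σ_{A ⊆ E} (x−1)^{r(E)−r(A)} (y−1)^{|A|−r(A)}`. -/
noncomputable def tutte {V : Type*} [Fintype V] [DecidableEq V]
    (G : SimpleGraph V) [DecidableRel G.Adj] (x y : ℝ) : ℝ :=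
  ∑ A ∈ G.edgeFinset.powerset,
    (x - 1) ^ (edgeRank V G.edgeFinset - edgeRank V A) *
      (y - 1) ^ (A.card - edgeRank V A)

/-
Expanding `ℓ = 1 + (ℓ - 1)` at every monochromatic edge turns `∑_f ℓ^{#mono(f)}` into
`∑_{A ⊆ E} (ℓ - 1)^{|A|} · #{f constant along A}`, and a colouring is constant along `A`
exactly when it factors through the components of `(V, A)`, so the count is `k^{c(A)}`.
Writing `c(A) = n - r(A)`, each such term is the corresponding term of the Tutte sum times
`k^{c(G)} (ℓ - 1)^{r(G)}`. The truncated subtractions in the Tutte exponents are harmless because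
`r(A) ≤ r(E)` and `r(A) ≤ |A|`; the latter holds since adding one edge merges at most two
components.
-/

open Finset

namespace SimpleGraph

variable {V α : Type*} {G : SimpleGraph V}

theorem Reachable.apply_eq_of_forall_adj {f : V → α} (hf : ∀ u v, G.Adj u v → f u = f v)
    {u v : V} (h : G.Reachable u v) : f u = f v := by
  simpa [Relation.reflTransGen_eq_self] using ((reachable_iff_reflTransGen u v).1 h).lift f hf

variable (G α) in
def ConnectedComponent.liftEquiv :
    {f : V → α // ∀ u v, G.Adj u v → f u = f v} ≃ (G.ConnectedComponent → α) where
  toFun f := ConnectedComponent.lift f.1 fun _ _ p _ => p.reachable.apply_eq_of_forall_adj f.2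
  invFun g := ⟨fun v => g (G.connectedComponentMk v),
    fun _ _ h => congrArg g (ConnectedComponent.connectedComponentMk_eq_of_adj h)⟩
  left_inv _ := rfl
  right_inv _ := funext fun c => c.ind fun _ => rfl

theorem card_forall_adj_apply_eq [Finite V] :
    Nat.card {f : V → α // ∀ u v, G.Adj u v → f u = f v} =
      Nat.card α ^ Nat.card G.ConnectedComponent := by
  rw [Nat.card_congr (ConnectedComponent.liftEquiv ..), Nat.card_fun]

theorem card_connectedComponent_le [Finite V] : Nat.card G.ConnectedComponent ≤ Nat.card V :=
  Nat.card_le_card_of_surjective _ fun c => c.ind fun v => ⟨v, rfl⟩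

theorem card_connectedComponent_bot :
    Nat.card (⊥ : SimpleGraph V).ConnectedComponent = Nat.card V :=
  (Nat.card_eq_of_bijective _ ⟨fun _ _ h => reachable_bot.mp (ConnectedComponent.exact h),
    fun c => c.ind fun v => ⟨v, rfl⟩⟩).symm

theorem Reachable.of_sup_edge {a b u v : V} (h : (G ⊔ edge a b).Reachable u v) :
    G.Reachable u v ∨ G.Reachable u a ∧ G.Reachable b v ∨ G.Reachable u b ∧ G.Reachable a v := by
  obtain ⟨p⟩ := h
  induction p with
  | nil => exact Or.inl (Reachable.refl _)
  | @cons u w v hadj _ ih =>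
    rw [sup_adj, edge_adj] at hadj
    rcases hadj with hG | ⟨⟨rfl, rfl⟩ | ⟨rfl, rfl⟩, -⟩
    · rcases ih with h | ⟨h₁, h₂⟩ | ⟨h₁, h₂⟩
      · exact Or.inl (hG.reachable.trans h)
      · exact Or.inr (Or.inl ⟨hG.reachable.trans h₁, h₂⟩)
      · exact Or.inr (Or.inr ⟨hG.reachable.trans h₁, h₂⟩)
    · rcases ih with h | ⟨-, h₂⟩ | ⟨-, h₂⟩
      · exact Or.inr (Or.inl ⟨.rfl, h⟩)
      · exact Or.inr (Or.inl ⟨.rfl, h₂⟩)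
      · exact Or.inl h₂
    · rcases ih with h | ⟨-, h₂⟩ | ⟨-, h₂⟩
      · exact Or.inr (Or.inr ⟨.rfl, h⟩)
      · exact Or.inl h₂
      · exact Or.inr (Or.inr ⟨.rfl, h₂⟩)

-- Every component of `G` other than that of `b` maps injectively into the components of
-- `G ⊔ edge a b`.
theorem card_connectedComponent_le_sup_edge_add_one [Finite V] (a b : V) :
    Nat.card G.ConnectedComponent ≤ Nat.card (G ⊔ edge a b).ConnectedComponent + 1 := by
  let φ (c : G.ConnectedComponent) : Option (G ⊔ edge a b).ConnectedComponent :=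
    if c = G.connectedComponentMk b then none else some (c.map (Hom.ofLE le_sup_left))
  have hφ : φ.Injective := by
    intro c₁ c₂ h
    induction c₁ using ConnectedComponent.ind with | h u => ?_
    induction c₂ using ConnectedComponent.ind with | h v => ?_
    by_cases hu : G.connectedComponentMk u = G.connectedComponentMk b <;>
      by_cases hv : G.connectedComponentMk v = G.connectedComponentMk b <;>
      simp only [φ, hu, hv, if_true, if_false, reduceCtorEq, Option.some_inj,
        ConnectedComponent.map_mk, ConnectedComponent.eq] at h ⊢
    rcases h.of_sup_edge with h | ⟨-, h⟩ | ⟨h, -⟩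
    · exact h
    · exact absurd (ConnectedComponent.sound h.symm) hv
    · exact absurd (ConnectedComponent.sound h) hu
  simpa using Nat.card_le_card_of_injective φ hφ

theorem card_le_card_add_card_connectedComponent_fromEdgeSet [Finite V] (A : Finset (Sym2 V)) :
    Nat.card V ≤ #A + Nat.card (fromEdgeSet (A : Set (Sym2 V))).ConnectedComponent := by
  induction A using Finset.induction_on with
  | empty => simp [card_connectedComponent_bot]
  | @insert e A he ih =>
    induction e with | h a b => ?_
    have hsup : fromEdgeSet ↑(insert s(a, b) A) = fromEdgeSet (A : Set (Sym2 V)) ⊔ edge a b := by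
      rw [coe_insert, Set.insert_eq, fromEdgeSet_union, sup_comm, edge]
    have := card_connectedComponent_le_sup_edge_add_one (G := fromEdgeSet ↑A) a b
    rw [card_insert_of_notMem he, hsup]
    omega

theorem forall_isDiag_map_iff_forall_adj {f : V → α} {A : Set (Sym2 V)} :
    (∀ e ∈ A, (e.map f).IsDiag) ↔ ∀ u v, (fromEdgeSet A).Adj u v → f u = f v := by
  refine ⟨fun h u v huv => ?_, fun h e he => ?_⟩
  · simpa using h _ huv.1
  · induction e with | h u v => ?_
    by_cases huv : u = v
    · simp [huv]
    · simpa using h u v ⟨he, huv⟩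

theorem card_filter_forall_isDiag_map [Fintype V] [DecidableEq V] [Fintype α] [DecidableEq α]
    (A : Finset (Sym2 V)) :
    #{f : V → α | ∀ e ∈ A, (e.map f).IsDiag} =
      Fintype.card α ^ Nat.card (fromEdgeSet (A : Set (Sym2 V))).ConnectedComponent := by
  rw [← Fintype.card_subtype, ← Nat.card_eq_fintype_card, ← Nat.card_eq_fintype_card,
    ← card_forall_adj_apply_eq]
  simp_rw [← forall_isDiag_map_iff_forall_adj, mem_coe]

theorem sum_pow_card_isDiag_eq_sum_powerset {R : Type*} [Fintype V] [DecidableEq V]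
    [Fintype α] [DecidableEq α] [CommRing R] (E : Finset (Sym2 V)) (x : R) :
    ∑ f : V → α, x ^ #(E.filter fun e => (e.map f).IsDiag) =
      ∑ A ∈ E.powerset, (x - 1) ^ #A *
        (Fintype.card α : R) ^ Nat.card (fromEdgeSet (A : Set (Sym2 V))).ConnectedComponent := by
  have binomial (s : Finset (Sym2 V)) : x ^ #s = ∑ t ∈ s.powerset, (x - 1) ^ #t := by
    simpa using (sum_pow_mul_eq_add_pow (x - 1) 1 s).symm
  simp_rw [binomial]
  rw [sum_comm' (t' := E.powerset)
    (s' := fun A : Finset (Sym2 V) => univ.filter fun f : V → α => ∀ e ∈ A, (e.map f).IsDiag)]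
  · refine sum_congr rfl fun A _ => ?_
    rw [sum_const, nsmul_eq_mul, mul_comm, card_filter_forall_isDiag_map, Nat.cast_pow]
  · intro f A
    simp [subset_iff, imp_and, forall_and, and_comm]

end SimpleGraph

section edgeRank

open SimpleGraph

variable {V : Type*} [Fintype V]

theorem edgeRank_add_card_connectedComponent (A : Finset (Sym2 V)) :
    edgeRank V A + Nat.card (fromEdgeSet (A : Set (Sym2 V))).ConnectedComponent =
      Fintype.card V := by
  have := card_connectedComponent_le (G := fromEdgeSet (A : Set (Sym2 V)))
  rw [Nat.card_eq_fintype_card (α := V)] at this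
  unfold edgeRank
  omega

theorem edgeRank_le_card (A : Finset (Sym2 V)) : edgeRank V A ≤ #A := by
  have := card_le_card_add_card_connectedComponent_fromEdgeSet A
  rw [Nat.card_eq_fintype_card] at this
  unfold edgeRank
  omega

theorem edgeRank_mono {A B : Finset (Sym2 V)} (h : A ⊆ B) : edgeRank V A ≤ edgeRank V B := by
  have := ConnectedComponent.card_le_card_of_le (fromEdgeSet_mono (coe_subset.2 h))
  unfold edgeRank
  omega

theorem mul_tutte_term_eq_potts_term {E A : Finset (Sym2 V)} (hA : A ⊆ E) (k : ℝ) {y : ℝ}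
    (hy : y ≠ 0) :
    k ^ Nat.card (fromEdgeSet (E : Set (Sym2 V))).ConnectedComponent * y ^ edgeRank V E *
        (((y + k) / y - 1) ^ (edgeRank V E - edgeRank V A) * y ^ (#A - edgeRank V A)) =
      y ^ #A * k ^ Nat.card (fromEdgeSet (A : Set (Sym2 V))).ConnectedComponent := by
  have hE := edgeRank_add_card_connectedComponent E
  have hA' := edgeRank_add_card_connectedComponent A
  obtain ⟨d, hd⟩ := Nat.exists_eq_add_of_le (edgeRank_mono hA)
  obtain ⟨m, hm⟩ := Nat.exists_eq_add_of_le (edgeRank_le_card A)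
  have hc : Nat.card (fromEdgeSet (A : Set (Sym2 V))).ConnectedComponent =
      Nat.card (fromEdgeSet (E : Set (Sym2 V))).ConnectedComponent + d := by omega
  have hx : (y + k) / y - 1 = k / y := by field_simp; ring
  rw [hd, hm, hc, Nat.add_sub_cancel_left, Nat.add_sub_cancel_left, hx, div_pow]
  field_simp
  ring

end edgeRank

/-- The weighted homomorphism count into `K_k^ℓ` (complete graph with a loop of weight
`ℓ` at each vertex), `Σ_f ℓ^{#monochromatic edges}`, equals the Potts partition-function
specialization `k^{c(G)} (ℓ−1)^{r(G)} T(G; (ℓ−1+k)/(ℓ−1), ℓ)` of the Tutte polynomial. -/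
theorem hom_weighted_loops_eq_tutte {V : Type*} [Fintype V] [DecidableEq V]
    (G : SimpleGraph V) [DecidableRel G.Adj] (k : ℕ) (ℓ : ℝ) (hℓ : ℓ ≠ 1) :
    (∑ f : V → Fin k,
        ℓ ^ (G.edgeFinset.filter (fun e => (Sym2.map f e).IsDiag)).card) =
      (k : ℝ) ^ Nat.card G.ConnectedComponent *
        (ℓ - 1) ^ (Fintype.card V - Nat.card G.ConnectedComponent) *
          tutte G ((ℓ - 1 + k) / (ℓ - 1)) ℓ := by
  have hG : SimpleGraph.fromEdgeSet (G.edgeFinset : Set (Sym2 V)) = G := by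
    rw [SimpleGraph.coe_edgeFinset, SimpleGraph.fromEdgeSet_edgeSet]
  have hrank : edgeRank V G.edgeFinset = Fintype.card V - Nat.card G.ConnectedComponent := by
    rw [edgeRank, hG]
  rw [SimpleGraph.sum_pow_card_isDiag_eq_sum_powerset, tutte, mul_sum, Fintype.card_fin, ← hrank]
  refine sum_congr rfl fun A hA => ?_
  rw [← mul_tutte_term_eq_potts_term (mem_powerset.1 hA) k (sub_ne_zero.2 hℓ), hG]
end

section
/- Let H be a simple graph and, for each vertex v ∈ V(H), let F_v be a graph (the ornament of v). Let H[{F_v}] denote the composition: the disjoint union of the F_v with all edges added between F_u and F_v whenever uv ∈ E(H). Then for every graph G, hom(G, H[{F_v}]) = Σ over homomorphisms f : G → H[{K₁¹}] of ∏_{v ∈ V(H)} hom(G[f⁻¹({v})], F_v), where H[{K₁¹}] is H with a loop added at every vertex and G[f⁻¹({v})] is the induced subgraph of G on the preimage of v. -/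
/-!
A map `F : α → Σ v, γ v` is the same as its coarse part `f = Sigma.fst ∘ F : α → β` together
with, for every `v`, a map from the fibre `f⁻¹(v)` into `γ v`. Since `H` has no loops, an edge of
`G` goes to an edge of `H[{F_v}]` exactly when its endpoints land either in adjacent vertices of
`H`, or in one vertex `v` and then in an edge of `F_v`. So homomorphisms into `H[{F_v}]` are
coarse homomorphisms into the looped `H` together with independent homomorphisms of the fibres
into the ornaments, and counting them gives a sum of products.
-/

open scoped Classical

/-- Number of homomorphisms between (possibly looped) graphs given by adjacency
relations. -/
noncomputable def homCount {α β : Type*} (A : α → α → Prop) (B : β → β → Prop) : ℕ :=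
  Nat.card {f : α → β // ∀ a b, A a b → B (f a) (f b)}

def Equiv.subtypeSigmaPiEquiv {ι κ : Type*} {B : ι → κ → Type*} (p : ι → Prop)
    (r : ∀ i j, B i j → Prop) :
    {x : Σ i, ∀ j, B i j // p x.1 ∧ ∀ j, r x.1 j (x.2 j)} ≃
      Σ i : Subtype p, ∀ j, {b : B i j // r i j b} where
  toFun x := ⟨⟨x.1.1, x.2.1⟩, fun j => ⟨x.1.2 j, x.2.2 j⟩⟩
  invFun y := ⟨⟨y.1.1, fun j => (y.2 j).1⟩, y.1.2, fun j => (y.2 j).2⟩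
  left_inv _ := rfl
  right_inv _ := rfl

namespace HomComposition

variable {α β : Type*} {γ : β → Type*}

/-- Adjacency in the composition `H[{F_v}]`, the ornament of `v` being `R v` on `γ v`. -/
def compositionRel (H : β → β → Prop) (R : ∀ v, γ v → γ v → Prop) (p q : Σ v, γ v) : Prop :=
  H p.1 q.1 ∨ ∃ h : q.1 = p.1, R p.1 p.2 (h ▸ q.2)

theorem compositionRel_mk_mk_iff {H : SimpleGraph β} {R : ∀ v, γ v → γ v → Prop} {v : β}
    {x y : γ v} : compositionRel H.Adj R ⟨v, x⟩ ⟨v, y⟩ ↔ R v x y := by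
  simp [compositionRel]

theorem compositionRel.fst_eq_or_adj {H : β → β → Prop} {R : ∀ v, γ v → γ v → Prop}
    {p q : Σ v, γ v} (h : compositionRel H R p q) : p.1 = q.1 ∨ H p.1 q.1 := by
  rcases h with h | ⟨h, -⟩
  · exact Or.inr h
  · exact Or.inl h.symm

def arrowSigmaEquiv : (α → Σ v, γ v) ≃ Σ f : α → β, ∀ v, {a // f a = v} → γ v where
  toFun F := ⟨fun a => (F a).1, fun _ x => x.2 ▸ (F x.1).2⟩
  invFun fg a := ⟨fg.1 a, fg.2 _ ⟨a, rfl⟩⟩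
  left_inv _ := rfl
  right_inv := by
    rintro ⟨f, g⟩
    refine Sigma.ext rfl (heq_of_eq (funext fun v => funext ?_))
    rintro ⟨a, rfl⟩
    rfl

theorem arrowSigmaEquiv_symm_apply_coe (f : α → β) (g : ∀ v, {a // f a = v} → γ v) {v : β}
    (x : {a // f a = v}) : arrowSigmaEquiv.symm ⟨f, g⟩ x = ⟨v, g v x⟩ := by
  obtain ⟨a, rfl⟩ := x
  rfl

theorem isHom_compositionRel_iff (A : α → α → Prop) (H : SimpleGraph β)
    (R : ∀ v, γ v → γ v → Prop) (f : α → β) (g : ∀ v, {a // f a = v} → γ v) :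
    (∀ a b, A a b → compositionRel H.Adj R (arrowSigmaEquiv.symm ⟨f, g⟩ a)
        (arrowSigmaEquiv.symm ⟨f, g⟩ b)) ↔
      (∀ a b, A a b → f a = f b ∨ H.Adj (f a) (f b)) ∧
        ∀ v (x y : {a // f a = v}), A x.1 y.1 → R v (g v x) (g v y) := by
  constructor
  · intro hF
    refine ⟨fun a b hab => (hF a b hab).fst_eq_or_adj, fun v x y hxy => ?_⟩
    have hxy := hF x y hxy
    rwa [arrowSigmaEquiv_symm_apply_coe, arrowSigmaEquiv_symm_apply_coe,
      compositionRel_mk_mk_iff] at hxy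
  · rintro ⟨hf, hg⟩ a b hab
    rcases hf a b hab with h | h
    · rw [arrowSigmaEquiv_symm_apply_coe f g (⟨a, rfl⟩ : {x // f x = f a}),
        arrowSigmaEquiv_symm_apply_coe f g (⟨b, h.symm⟩ : {x // f x = f a}),
        compositionRel_mk_mk_iff]
      exact hg _ _ _ hab
    · exact Or.inl h

def compositionHomEquiv (A : α → α → Prop) (H : SimpleGraph β) (R : ∀ v, γ v → γ v → Prop) :
    {F : α → Σ v, γ v // ∀ a b, A a b → compositionRel H.Adj R (F a) (F b)} ≃
      Σ f : {f : α → β // ∀ a b, A a b → f a = f b ∨ H.Adj (f a) (f b)},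
        ∀ v, {g : {a // f.1 a = v} → γ v // ∀ x y, A x.1 y.1 → R v (g x) (g y)} :=
  (arrowSigmaEquiv.symm.subtypeEquiv fun x => (isHom_compositionRel_iff A H R x.1 x.2).symm).symm
    |>.trans (Equiv.subtypeSigmaPiEquiv (B := fun (f : α → β) v => {a // f a = v} → γ v)
      (fun f => ∀ a b, A a b → f a = f b ∨ H.Adj (f a) (f b))
      fun _ v g => ∀ x y, A x.1 y.1 → R v (g x) (g y))

theorem homCount_compositionRel [Fintype α] [Fintype β] [∀ v, Finite (γ v)]
    (A : α → α → Prop) (H : SimpleGraph β) (R : ∀ v, γ v → γ v → Prop) :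
    homCount A (compositionRel H.Adj R) =
      ∑ f : {f : α → β // ∀ a b, A a b → f a = f b ∨ H.Adj (f a) (f b)},
        ∏ v : β, homCount (fun x y : {a : α // f.1 a = v} => A x.1 y.1) (R v) := by
  rw [homCount, Nat.card_congr (compositionHomEquiv A H R), Nat.card_sigma]
  simp only [Nat.card_pi, homCount]

end HomComposition

theorem hom_composition_general {α β : Type*} [Fintype α] [Fintype β]
    (G : SimpleGraph α) (H : SimpleGraph β)
    (γ : β → Type*) [∀ v, Fintype (γ v)]
    (R : ∀ v, γ v → γ v → Prop) :
    homCount G.Adj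
        (fun p q : Σ v, γ v =>
          H.Adj p.1 q.1 ∨ ∃ h : q.1 = p.1, R p.1 p.2 (h ▸ q.2)) =
      ∑ f : {f : α → β // ∀ a b, G.Adj a b → f a = f b ∨ H.Adj (f a) (f b)},
        ∏ v : β,
          homCount (fun x y : {a : α // f.1 a = v} => G.Adj x.1 y.1) (R v) :=
  HomComposition.homCount_compositionRel G.Adj H R

/-- Composition formula for ornamented graphs: if each vertex `v` of `H` is ornamented
with a (possibly looped) graph `R v` on vertex set `γ v`, then the homomorphism count
from `G` into the composition `H[{F_v}]` (disjoint union of the ornaments with joins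
along edges of `H`) decomposes over homomorphisms `f : G → H[{K₁¹}]` (into `H` with a
loop at every vertex) as the product over `v` of the homomorphism counts of the induced
subgraphs `G[f⁻¹(v)]` into the ornaments. -/
theorem hom_composition {α β : Type*} [Fintype α] [Fintype β]
    (G : SimpleGraph α) (H : SimpleGraph β)
    (γ : β → Type*) [∀ v, Fintype (γ v)]
    (R : ∀ v, γ v → γ v → Prop) (hR : ∀ v, Symmetric (R v)) :
    homCount G.Adj
        (fun p q : Σ v, γ v =>
          H.Adj p.1 q.1 ∨ ∃ h : q.1 = p.1, R p.1 p.2 (h ▸ q.2)) =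
      ∑ f : {f : α → β // ∀ a b, G.Adj a b → f a = f b ∨ H.Adj (f a) (f b)},
        ∏ v : β,
          homCount (fun x y : {a : α // f.1 a = v} => G.Adj x.1 y.1) (R v) :=
  hom_composition_general G H γ R
end
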